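/- arXiv:math/0206143 — 3 statements merged into one kernel-verified Lean document; each statement's English description precedes it below -/
import Mathlib

section
/- A skew-symmetric complex 6×6 matrix X (Xᵀ = -X) satisfies det X = 0 if and only if there exist u₁, v₁, u₂, v₂ ∈ ℂ⁶ with X = u₁ v₁ᵀ - v₁ u₁ᵀ + u₂ v₂ᵀ - v₂ u₂ᵀ, i.e. if and only if X has rank at most 4. Thus the cubic hypersurface Q₂ in P(Λ²ℂ⁶) ≅ P¹⁴ℂ, arising from the intermediate holomorphic nilpotent orbit of so*(12), is the chordal variety of the Grassmannian G₂(ℂ⁶). -/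
/-!
Work with alternating matrices (`Xᵀ = -X` with zero diagonal). If `X i j ≠ 0`, put
`u = X eᵢ` and `v = X eⱼ / X i j`. Then `Y = X - (u vᵀ - v uᵀ)` is again alternating and
kills `eᵢ` and `eⱼ`. It also kills `ker X`, because `u` and `v` lie in `range X`, which is
orthogonal to `ker X`. Since `X eᵢ` and `X eⱼ` are independent, `rank Y ≤ rank X - 2`.
Iterating, an alternating matrix of rank `< 2k + 2` is a sum of `k` such wedges. For a `6 × 6`
matrix, `det X = 0` means `rank X < 6`, so `X` is a sum of two wedges and has rank at most `4`.
-/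

open Matrix Module Submodule

namespace LinearMap

variable {K V W W' ι : Type*} [Field K] [AddCommGroup V] [Module K V] [FiniteDimensional K V]
  [AddCommGroup W] [Module K W] [AddCommGroup W'] [Module K W'] [Fintype ι]

theorem finrank_ker_add_card_le {f : V →ₗ[K] W} {g : V →ₗ[K] W'} (hker : ker f ≤ ker g)
    (w : ι → V) (hgw : ∀ l, g (w l) = 0) (hfw : LinearIndependent K (f ∘ w)) :
    finrank K (ker f) + Fintype.card ι ≤ finrank K (ker g) := by
  have hdisj : ker f ⊓ span K (Set.range w) = ⊥ :=
    (Submodule.range_ker_disjoint hfw).symm.eq_bot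
  have hle : ker f ⊔ span K (Set.range w) ≤ ker g :=
    sup_le hker (span_le.mpr (Set.range_subset_iff.mpr hgw))
  calc finrank K (ker f) + Fintype.card ι
      = finrank K (ker f ⊔ span K (Set.range w) : Submodule K V) := by
        have := Submodule.finrank_sup_add_finrank_inf_eq (ker f) (span K (Set.range w))
        rw [hdisj, finrank_bot, finrank_span_eq_card hfw.of_comp] at this
        omega
    _ ≤ finrank K (ker g) := Submodule.finrank_mono hle

end LinearMap

namespace Matrix

section CommRing

variable {R n : Type*} [CommRing R]

def wedge (u v : n → R) : Matrix n n R := vecMulVec u v - vecMulVec v u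

-- In characteristic `2` the condition `Xᵀ = -X` alone does not force a zero diagonal.
structure IsAlternating (X : Matrix n n R) : Prop where
  transpose_eq_neg : Xᵀ = -X
  diag_eq_zero : ∀ i, X i i = 0

theorem isAlternating_wedge (u v : n → R) : (wedge u v).IsAlternating where
  transpose_eq_neg := by simp only [wedge, transpose_sub, transpose_vecMulVec, neg_sub]
  diag_eq_zero i := by simp [wedge, vecMulVec_apply, mul_comm]

theorem IsAlternating.of_transpose_eq_neg [IsAddTorsionFree R] {X : Matrix n n R}
    (hX : Xᵀ = -X) : X.IsAlternating where
  transpose_eq_neg := hX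
  diag_eq_zero i := self_eq_neg.mp (by simpa using congrFun (congrFun hX i) i)

theorem wedge_mulVec [Fintype n] (u v z : n → R) :
    wedge u v *ᵥ z = (v ⬝ᵥ z) • u - (u ⬝ᵥ z) • v := by
  simp only [wedge, sub_mulVec, vecMulVec_mulVec, op_smul_eq_smul]

namespace IsAlternating

variable {X Y : Matrix n n R}

theorem apply_swap (hX : X.IsAlternating) (i j : n) : X j i = -X i j := by
  simpa using congrFun (congrFun hX.transpose_eq_neg i) j

theorem sub (hX : X.IsAlternating) (hY : Y.IsAlternating) : (X - Y).IsAlternating where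
  transpose_eq_neg := by rw [transpose_sub, hX.transpose_eq_neg, hY.transpose_eq_neg]; abel
  diag_eq_zero i := by simp [hX.diag_eq_zero, hY.diag_eq_zero]

variable [Fintype n]

theorem mulVec_dotProduct_eq_zero (hX : X.IsAlternating) {z : n → R} (hz : X *ᵥ z = 0)
    (p : n → R) : (X *ᵥ p) ⬝ᵥ z = 0 := by
  rw [dotProduct_comm, dotProduct_mulVec, ← mulVec_transpose, hX.transpose_eq_neg, neg_mulVec, hz,
    neg_zero, zero_dotProduct]

theorem ker_le_ker_sub_wedge (hX : X.IsAlternating) (p q : n → R) :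
    LinearMap.ker X.mulVecLin ≤ LinearMap.ker (X - wedge (X *ᵥ p) (X *ᵥ q)).mulVecLin := by
  intro z hz
  rw [LinearMap.mem_ker, mulVecLin_apply] at hz ⊢
  rw [sub_mulVec, wedge_mulVec, hz, hX.mulVec_dotProduct_eq_zero hz,
    hX.mulVec_dotProduct_eq_zero hz]
  simp

end IsAlternating

end CommRing

section Field

variable {K m n : Type*} [Field K] [Fintype n]

theorem rank_add_finrank_ker_mulVecLin (X : Matrix m n K) :
    X.rank + finrank K (LinearMap.ker X.mulVecLin) = Fintype.card n := by
  rw [rank, LinearMap.finrank_range_add_finrank_ker, finrank_fintype_fun_eq_card]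

theorem rank_add_le (A B : Matrix m n K) : (A + B).rank ≤ A.rank + B.rank := by
  unfold rank
  rw [mulVecLin_add]
  exact (Submodule.finrank_mono (LinearMap.range_add_le _ _)).trans
    (Submodule.finrank_add_le_finrank_add_finrank _ _)

theorem rank_wedge_le (u v : n → K) : (wedge u v).rank ≤ 2 := by
  rw [wedge, sub_eq_add_neg, ← neg_vecMulVec]
  exact (rank_add_le _ _).trans (add_le_add (rank_vecMulVec_le _ _) (rank_vecMulVec_le _ _))

variable [DecidableEq n]

theorem det_eq_zero_iff_rank_lt {X : Matrix n n K} : X.det = 0 ↔ X.rank < Fintype.card n := by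
  refine ⟨fun h => ?_, fun h => by_contra fun h' => h.ne (rank_of_det_ne_zero h')⟩
  obtain ⟨z, hz0, hz⟩ := exists_mulVec_eq_zero_iff.mpr h
  have hker : LinearMap.ker X.mulVecLin ≠ ⊥ := (Submodule.ne_bot_iff _).mpr ⟨z, hz, hz0⟩
  have := Submodule.finrank_eq_zero.not.mpr hker
  have := rank_add_finrank_ker_mulVecLin X
  omega

namespace IsAlternating

variable {X : Matrix n n K}

theorem rank_sub_wedge_add_two_le (hX : X.IsAlternating) {i j : n} (hij : X i j ≠ 0) :
    (X - wedge (X *ᵥ Pi.single i 1) (X *ᵥ Pi.single j (X i j)⁻¹)).rank + 2 ≤ X.rank := by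
  set u := X *ᵥ Pi.single i 1 with hu
  set v := X *ᵥ Pi.single j (X i j)⁻¹
  set Y := X - wedge u v
  have hui : u i = 0 := by simp [u, hX.diag_eq_zero]
  have huj : u j = -X i j := by simp [u, hX.apply_swap i j]
  have hvi : v i = 1 := by simp [v, mul_inv_cancel₀ hij]
  have hvj : v j = 0 := by simp [v, hX.diag_eq_zero]
  have hXj : X *ᵥ Pi.single j 1 = X i j • v := by
    rw [← mulVec_smul, ← Pi.single_smul, smul_eq_mul, mul_inv_cancel₀ hij]
  have hYi : Y *ᵥ Pi.single i 1 = 0 := by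
    rw [sub_mulVec, ← hu, wedge_mulVec, dotProduct_single, dotProduct_single, hvi, hui]
    simp
  have hYj : Y *ᵥ Pi.single j 1 = 0 := by
    rw [sub_mulVec, wedge_mulVec, dotProduct_single, dotProduct_single, hvj, huj, hXj]
    simp
  have hli : LinearIndependent K (X.mulVecLin ∘ ![Pi.single i 1, Pi.single j 1]) := by
    have hcomp : X.mulVecLin ∘ ![Pi.single i 1, Pi.single j 1] = ![u, X i j • v] := by
      ext l : 1; fin_cases l <;> simp [u, hXj]
    rw [hcomp, LinearIndependent.pair_iff]
    intro s t hst
    exact ⟨by simpa [huj, hvj, hij] using congrFun hst j,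
      by simpa [hui, hvi, hij] using congrFun hst i⟩
  have hker :
      finrank K (LinearMap.ker X.mulVecLin) + 2 ≤ finrank K (LinearMap.ker Y.mulVecLin) :=
    LinearMap.finrank_ker_add_card_le (hX.ker_le_ker_sub_wedge _ _)
      ![Pi.single i 1, Pi.single j 1] (fun l => by fin_cases l; exacts [hYi, hYj]) hli
  have := rank_add_finrank_ker_mulVecLin X
  have := rank_add_finrank_ker_mulVecLin Y
  omega

theorem exists_rank_sub_wedge_add_two_le (hX : X.IsAlternating) (h0 : X ≠ 0) :
    ∃ u v : n → K, (X - wedge u v).rank + 2 ≤ X.rank := by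
  obtain ⟨i, j, hij⟩ : ∃ i j, X i j ≠ 0 := by
    by_contra! h
    exact h0 (ext h)
  exact ⟨_, _, hX.rank_sub_wedge_add_two_le hij⟩

theorem exists_eq_sum_wedge_of_rank_lt {k : ℕ} (hX : X.IsAlternating)
    (hrank : X.rank < 2 * k + 2) :
    ∃ u v : Fin k → n → K, X = ∑ l, wedge (u l) (v l) := by
  induction k generalizing X with
  | zero =>
    refine ⟨0, 0, ?_⟩
    by_contra h0
    obtain ⟨u, v, hstep⟩ := hX.exists_rank_sub_wedge_add_two_le (by simpa using h0)
    omega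
  | succ k ih =>
    by_cases h0 : X = 0
    · exact ⟨0, 0, by simp [h0, wedge]⟩
    obtain ⟨u, v, hstep⟩ := hX.exists_rank_sub_wedge_add_two_le h0
    obtain ⟨u', v', hsum⟩ := ih (hX.sub (isAlternating_wedge u v)) (by omega)
    exact ⟨Fin.cons u u', Fin.cons v v', by simp [Fin.sum_univ_succ, ← hsum]⟩

end IsAlternating

end Field

end Matrix

/-- A skew-symmetric complex `6×6` matrix `X` satisfies `det X = 0` if and
only if `X` is a sum of two decomposables
`u₁ v₁ᵀ - v₁ u₁ᵀ + u₂ v₂ᵀ - v₂ u₂ᵀ`, i.e. if and only if `X` has rank at most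
`4`. Thus the cubic hypersurface `Q₂` in `P(Λ²ℂ⁶) ≅ P¹⁴ℂ`, arising from the
intermediate holomorphic nilpotent orbit of `so*(12)`, is the chordal variety
of the Grassmannian `G₂(ℂ⁶)`. -/
theorem skew_det_zero_iff_sum_two_decomposables
    (X : Matrix (Fin 6) (Fin 6) ℂ) (hX : Xᵀ = -X) :
    (X.det = 0 ↔ ∃ u₁ v₁ u₂ v₂ : Fin 6 → ℂ,
      X = (vecMulVec u₁ v₁ - vecMulVec v₁ u₁) +
          (vecMulVec u₂ v₂ - vecMulVec v₂ u₂)) ∧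
    (X.det = 0 ↔ X.rank ≤ 4) := by
  have hdet : X.det = 0 ↔ X.rank < 6 := by simpa using det_eq_zero_iff_rank_lt (X := X)
  have hdecomp (hrank : X.rank < 6) :
      ∃ u₁ v₁ u₂ v₂ : Fin 6 → ℂ, X = wedge u₁ v₁ + wedge u₂ v₂ := by
    obtain ⟨u, v, hsum⟩ :=
      (IsAlternating.of_transpose_eq_neg hX).exists_eq_sum_wedge_of_rank_lt (k := 2) hrank
    exact ⟨u 0, v 0, u 1, v 1, by simpa [Fin.sum_univ_two] using hsum⟩
  have hrank : (∃ u₁ v₁ u₂ v₂ : Fin 6 → ℂ, X = wedge u₁ v₁ + wedge u₂ v₂) → X.rank ≤ 4 := by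
    rintro ⟨u₁, v₁, u₂, v₂, rfl⟩
    exact (rank_add_le _ _).trans (add_le_add (rank_wedge_le _ _) (rank_wedge_le _ _))
  have hdet_rank : X.det = 0 ↔ X.rank ≤ 4 :=
    ⟨fun h => hrank (hdecomp (hdet.mp h)), fun h => hdet.mpr (by omega)⟩
  exact ⟨⟨fun h => hdecomp (hdet.mp h), fun h => hdet_rank.mpr (hrank h)⟩, hdet_rank⟩
end

section
/- For n, s ≥ 1, the image of the map α ↦ α αᵀ from the complex n×s matrices to the complex n×n matrices is exactly the set of symmetric complex n×n matrices of rank at most s. This realizes the complex affine categorical quotient Hom(ℂˢ, ℂⁿ) // O(s,ℂ) as the determinantal variety of symmetric matrices of rank ≤ s, the image in p⁺ of the closure of the s-th holomorphic nilpotent orbit of sp(n,ℝ). -/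
open Matrix

lemma vecMulVec_mulVec' {n : ℕ} (u v x : Fin n → ℂ) :
    vecMulVec u v *ᵥ x = (v ⬝ᵥ x) • u := by
  ext i
  simp [vecMulVec_apply, mulVec, dotProduct, Finset.mul_sum, mul_comm, mul_left_comm]

lemma aux_decomp {n : ℕ} : ∀ (k : ℕ) (X : Matrix (Fin n) (Fin n) ℂ), Xᵀ = X → X.rank ≤ k →
    ∃ f : Fin k → (Fin n → ℂ), X = ∑ i, vecMulVec (f i) (f i) := by
  intro k
  induction k with
  | zero =>
    intro X hX hr
    refine ⟨0, ?_⟩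
    simp only [Nat.le_zero] at hr
    have h0 : LinearMap.range X.mulVecLin = ⊥ := Submodule.finrank_eq_zero.mp hr
    rw [LinearMap.range_eq_bot] at h0
    have : X = 0 := by
      ext i j
      have := congrFun (congrArg DFunLike.coe h0) (Pi.single j 1)
      simpa [mulVecLin_apply, mulVec_single] using congrFun this i
    simp [this]
  | succ k ih =>
    intro X hX hr
    by_cases hz : X = 0
    · refine ⟨0, ?_⟩
      ext i j
      simp [hz, vecMulVec_apply]
    -- find v with v ⬝ᵥ X *ᵥ v ≠ 0
    have hsymm : ∀ u v : Fin n → ℂ, u ⬝ᵥ X *ᵥ v = v ⬝ᵥ X *ᵥ u := by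
      intro u v
      rw [dotProduct_mulVec, ← mulVec_transpose, hX, dotProduct_comm]
    obtain ⟨v, hv⟩ : ∃ v : Fin n → ℂ, v ⬝ᵥ X *ᵥ v ≠ 0 := by
      by_contra h
      push_neg at h
      apply hz
      ext i j
      have key : Pi.single i 1 ⬝ᵥ X *ᵥ Pi.single j (1:ℂ) = 0 := by
        have h1 := h (Pi.single i 1 + Pi.single j 1)
        have h2 := h (Pi.single i 1)
        have h3 := h (Pi.single j 1)
        have h4 := hsymm (Pi.single i (1:ℂ)) (Pi.single j 1)
        rw [mulVec_add, dotProduct_add, add_dotProduct, add_dotProduct] at h1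
        rw [h4] at h1
        rw [h2, h3] at h1
        have h5 : Pi.single j 1 ⬝ᵥ X *ᵥ Pi.single i (1:ℂ) = 0 := by
          linear_combination h1 / 2
        rw [h4, h5]
      simpa [mulVec_single, single_dotProduct] using key
    set c := v ⬝ᵥ X *ᵥ v with hc
    set w := X *ᵥ v with hw
    set Y := X - c⁻¹ • vecMulVec w w with hY
    have hwv : w ⬝ᵥ v = c := by
      rw [hc]; exact dotProduct_comm _ _
    have hYmul : ∀ u, Y *ᵥ u = X *ᵥ u - (c⁻¹ * (w ⬝ᵥ u)) • w := by
      intro u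
      rw [hY, sub_mulVec, smul_mulVec, vecMulVec_mulVec', smul_smul]
    have hwu : ∀ u, X *ᵥ u = 0 → w ⬝ᵥ u = 0 := by
      intro u hu
      rw [hw, dotProduct_comm, hsymm, hu, dotProduct_zero]
    -- kernels
    have hle : LinearMap.ker X.mulVecLin ≤ LinearMap.ker Y.mulVecLin := by
      intro u hu
      simp only [LinearMap.mem_ker, mulVecLin_apply] at hu ⊢
      rw [hYmul, hu, hwu u hu, mul_zero, zero_smul, sub_zero]
    have hvY : v ∈ LinearMap.ker Y.mulVecLin := by
      simp only [LinearMap.mem_ker, mulVecLin_apply]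
      rw [hYmul, hwv, mul_comm, mul_inv_cancel₀ hv, one_smul, sub_self]
    have hvX : v ∉ LinearMap.ker X.mulVecLin := by
      intro hmem
      simp only [LinearMap.mem_ker, mulVecLin_apply] at hmem
      apply hv
      rw [hc, hw, hmem, dotProduct_zero]
    have hker : LinearMap.ker X.mulVecLin < LinearMap.ker Y.mulVecLin :=
      lt_of_le_of_ne hle (fun e => hvX (by rw [e]; exact hvY))
    have hkerlt := Submodule.finrank_lt_finrank_of_lt hker
    have hrnX := X.mulVecLin.finrank_range_add_finrank_ker
    have hrnY := Y.mulVecLin.finrank_range_add_finrank_ker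
    have hrY : Y.rank ≤ k := by
      have : Y.rank + 1 ≤ X.rank := by
        unfold Matrix.rank
        omega
      omega
    have hYsymm : Yᵀ = Y := by
      rw [hY, transpose_sub, transpose_smul, hX]
      congr 1
      ext i j
      simp [vecMulVec_apply, mul_comm]
    obtain ⟨f, hf⟩ := ih Y hYsymm hrY
    obtain ⟨d, hd⟩ := IsAlgClosed.exists_pow_nat_eq c (n := 2) (by norm_num)
    have hd0 : d ≠ 0 := by
      intro h; apply hv; rw [← hd, h]; ring
    refine ⟨Fin.cons (d⁻¹ • w) f, ?_⟩
    rw [Fin.sum_univ_succ]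
    simp only [Fin.cons_zero, Fin.cons_succ]
    rw [← hf]
    have heq : vecMulVec (d⁻¹ • w) (d⁻¹ • w) = c⁻¹ • vecMulVec w w := by
      ext i j
      simp only [vecMulVec_apply, Pi.smul_apply, smul_eq_mul, Matrix.smul_apply]
      have hcd : c⁻¹ = d⁻¹ * d⁻¹ := by rw [← hd, sq, mul_inv]
      rw [hcd]
      ring
    rw [heq, hY]
    abel

/-- For `n, s ≥ 1`, the image of the Hilbert map `α ↦ α αᵀ` on complex `n×s`
matrices is exactly the set of symmetric complex `n×n` matrices of rank at
most `s`. This realizes the complex affine categorical quotient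
`Hom(ℂˢ, ℂⁿ) // O(s,ℂ)` as the determinantal variety of symmetric matrices of
rank `≤ s`, the image in `p⁺` of the closure of the `s`-th holomorphic
nilpotent orbit of `sp(n,ℝ)`. -/
theorem range_hilbert_map_orthogonal (n s : ℕ) (hn : 1 ≤ n) (hs : 1 ≤ s) :
    Set.range (fun α : Matrix (Fin n) (Fin s) ℂ => α * αᵀ) =
      {X : Matrix (Fin n) (Fin n) ℂ | Xᵀ = X ∧ X.rank ≤ s} := by
  ext X
  constructor
  · rintro ⟨α, rfl⟩
    refine ⟨by rw [transpose_mul, transpose_transpose], ?_⟩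
    calc (α * αᵀ).rank ≤ α.rank := rank_mul_le_left α αᵀ
      _ ≤ s := by simpa using rank_le_card_width α
  · rintro ⟨hX, hr⟩
    obtain ⟨f, hf⟩ := aux_decomp s X hX hr
    refine ⟨Matrix.of (fun j i => f i j), ?_⟩
    ext i j
    rw [hf]
    simp [Matrix.mul_apply, Matrix.sum_apply, vecMulVec_apply, mul_comm]
end

section
/- Let α and β be complex n×s matrices both of rank s (in particular n ≥ s). If α αᵀ = β βᵀ, then there exists a complex s×s matrix g with gᵀ g = I_s (i.e. g ∈ O(s,ℂ)) such that β = α g. Hence on the open stratum of full-rank matrices, the fibers of the Hilbert map α ↦ α αᵀ are exactly the O(s,ℂ)-orbits, so the Hilbert map separates closed orbits there. -/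
open Matrix

/-
With left inverses `L α = 1` and `M β = 1`, the candidate is `g = L β`. The relation
`α αᵀ = β βᵀ` puts the columns of `β = (β βᵀ) Mᵀ = α (αᵀ Mᵀ)` in the column space of `α`,
whence `α g = β`; and `g gᵀ = L (β βᵀ) Lᵀ = (L α)(L α)ᵀ = 1`.
-/

namespace Matrix

variable {K R : Type*} {m n s : Type*} [Fintype m] [Fintype n] [Fintype s]

theorem exists_mul_eq_one_of_rank_eq_card_height [Field K] [DecidableEq m]
    (A : Matrix m n K) (hA : A.rank = Fintype.card m) : ∃ D : Matrix n m K, A * D = 1 := by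
  classical
  have hrange : LinearMap.range A.mulVecLin = ⊤ :=
    Submodule.eq_top_of_finrank_eq (by rw [← rank, hA, Module.finrank_fintype_fun_eq_card])
  obtain ⟨f, hf⟩ := A.mulVecLin.exists_rightInverse_of_surjective hrange
  refine ⟨LinearMap.toMatrix' f, toLin'.injective ?_⟩
  rw [toLin'_mul, toLin'_one, toLin'_apply', toLin'_toMatrix', hf]

theorem exists_mul_eq_one_of_rank_eq_card_width [Field K] [DecidableEq n]
    (A : Matrix m n K) (hA : A.rank = Fintype.card n) : ∃ L : Matrix n m K, L * A = 1 := by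
  obtain ⟨D, hD⟩ := Aᵀ.exists_mul_eq_one_of_rank_eq_card_height (by rwa [rank_transpose])
  exact ⟨Dᵀ, by simpa [transpose_mul] using congrArg transpose hD⟩

theorem exists_orthogonal_of_mul_transpose_eq [CommRing R] [DecidableEq s]
    {α β : Matrix m s R} {L M : Matrix s m R} (hL : L * α = 1) (hM : M * β = 1)
    (h : α * αᵀ = β * βᵀ) : ∃ g : Matrix s s R, gᵀ * g = 1 ∧ β = α * g := by
  have hβ : β = α * (αᵀ * Mᵀ) := by
    calc β = β * (M * β)ᵀ := by rw [hM, transpose_one, Matrix.mul_one]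
      _ = α * (αᵀ * Mᵀ) := by rw [transpose_mul, ← Matrix.mul_assoc, ← h, Matrix.mul_assoc]
  have hαg : α * (L * β) = β := by
    rw [hβ, ← Matrix.mul_assoc L, hL, Matrix.one_mul]
  have hggT : (L * β) * (L * β)ᵀ = 1 := by
    calc (L * β) * (L * β)ᵀ = L * (β * βᵀ) * Lᵀ := by
          simp only [transpose_mul, Matrix.mul_assoc]
      _ = (L * α) * (L * α)ᵀ := by rw [← h]; simp only [transpose_mul, Matrix.mul_assoc]
      _ = 1 := by rw [hL, transpose_one, Matrix.mul_one]
  exact ⟨L * β, mul_eq_one_comm.mp hggT, hαg.symm⟩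

end Matrix

/-- If `α` and `β` are complex `n×s` matrices of full rank `s` with
`α αᵀ = β βᵀ`, then `β = α g` for some `g ∈ O(s,ℂ)` (i.e. `gᵀ g = 1`). Hence
on the open stratum of full-rank matrices, the fibers of the Hilbert map
`α ↦ α αᵀ` are exactly the `O(s,ℂ)`-orbits, so the Hilbert map separates
closed orbits there. -/
theorem hilbert_map_fibers_full_rank (n s : ℕ)
    (α β : Matrix (Fin n) (Fin s) ℂ) (hα : α.rank = s) (hβ : β.rank = s)
    (h : α * αᵀ = β * βᵀ) :
    ∃ g : Matrix (Fin s) (Fin s) ℂ, gᵀ * g = 1 ∧ β = α * g := by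
  obtain ⟨L, hL⟩ := α.exists_mul_eq_one_of_rank_eq_card_width (by rw [hα, Fintype.card_fin])
  obtain ⟨M, hM⟩ := β.exists_mul_eq_one_of_rank_eq_card_width (by rw [hβ, Fintype.card_fin])
  exact exists_orthogonal_of_mul_transpose_eq hL hM h
end
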